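/- Let m ≥ 3 and let A be an mth order 2-dimensional complex tensor. The vector x = (1, i) ∈ ℂ² (where i = √−1) satisfies Ax^{m-1} = λx for some λ ∈ ℂ if and only if P_m + i·Q_m = 0; likewise, x = (1, −i) satisfies Ax^{m-1} = λx for some λ ∈ ℂ if and only if P_m − i·Q_m = 0. -/

import Mathlib

open Finset

noncomputable section

/-- `(A x^{m-1})_i` for an `m`th order `n`-dimensional tensor; the tensor is given with
its first index separated: `A i g` is the entry `a_{i, g 1, ..., g (m-1)}`. -/
def tApply {R : Type*} [CommRing R] {m1 n : ℕ} (A : Fin n → (Fin m1 → Fin n) → R)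
    (x : Fin n → R) (i : Fin n) : R :=
  ∑ g : Fin m1 → Fin n, A i g * ∏ j, x (g j)

/-- `x^T x = ∑ i, x i ^ 2`. -/
def dotSq {R : Type*} [CommRing R] {n : ℕ} (x : Fin n → R) : R := ∑ i, x i ^ 2

/-- A tensor is regular if the system `A x^{m-1} = 0, x^T x = 0` has no nonzero solution. -/
def Regular {m1 n : ℕ} (A : Fin n → (Fin m1 → Fin n) → ℂ) : Prop :=
  ¬∃ x : Fin n → ℂ, x ≠ 0 ∧ (∀ i, tApply A x i = 0) ∧ dotSq x = 0

/-- For `n = 2`: `bCoeff A 0 i = b_{i+1}` and `bCoeff A 1 i = c_{i+1}`, i.e. the coefficient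
of `x₁^{m-1-i} x₂^i` in the binary form `F_{i0+1}(x) = (A x^{m-1})_{i0+1}`. -/
def bCoeff {R : Type*} [CommRing R] {m1 : ℕ} (A : Fin 2 → (Fin m1 → Fin 2) → R)
    (i0 : Fin 2) (i : ℕ) : R :=
  ∑ g ∈ univ.filter (fun g : Fin m1 → Fin 2 => (univ.filter fun k => g k = 1).card = i), A i0 g

/-- The Sylvester matrix of binary forms of degrees `d` and `e` with coefficient
sequences `f` and `g` (`f i` is the coefficient of `x₁^{d-i} x₂^i`, similarly `g`):
the first `e` rows are shifted copies of `(f 0, ..., f d)`, the last `d` rows are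
shifted copies of `(g 0, ..., g e)`. -/
def sylM {R : Type*} [CommRing R] (d e : ℕ) (f g : ℕ → R) :
    Matrix (Fin (d + e)) (Fin (d + e)) R := fun i j =>
  if (i : ℕ) < e then
    (if (i : ℕ) ≤ (j : ℕ) ∧ (j : ℕ) ≤ (i : ℕ) + d then f ((j : ℕ) - (i : ℕ)) else 0)
  else
    (if (i : ℕ) - e ≤ (j : ℕ) ∧ (j : ℕ) ≤ ((i : ℕ) - e) + e then g ((j : ℕ) - ((i : ℕ) - e)) else 0)

/-- The resultant of binary forms of degrees `d` and `e`. -/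
def Res {R : Type*} [CommRing R] (d e : ℕ) (f g : ℕ → R) : R := (sylM d e f g).det

/-- `P_m = b₁ - c₂ - b₃ + c₄ + b₅ - c₆ - ⋯` (signs cyclic with period four). -/
def Pm (m : ℕ) (A : Fin 2 → (Fin (m - 1) → Fin 2) → ℂ) : ℂ :=
  ∑ i ∈ Finset.Icc 1 m,
    if i % 4 = 1 then bCoeff A 0 (i - 1)
    else if i % 4 = 2 then -bCoeff A 1 (i - 1)
    else if i % 4 = 3 then -bCoeff A 0 (i - 1)
    else bCoeff A 1 (i - 1)

/-- `Q_m = c₁ + b₂ - c₃ - b₄ + c₅ + b₆ - ⋯` (signs cyclic with period four). -/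
def Qm (m : ℕ) (A : Fin 2 → (Fin (m - 1) → Fin 2) → ℂ) : ℂ :=
  ∑ i ∈ Finset.Icc 1 m,
    if i % 4 = 1 then bCoeff A 1 (i - 1)
    else if i % 4 = 2 then bCoeff A 0 (i - 1)
    else if i % 4 = 3 then -bCoeff A 1 (i - 1)
    else -bCoeff A 0 (i - 1)

/-! For `ε² = -1`, the vector `x = (1, ε)` is an eigenvector iff `F₂(x) = ε F₁(x)`, i.e. iff
`F₁(x) + ε F₂(x) = 0`. Expanding `F_k(1, ε) = ∑ⱼ (coefficient of x₁^{m-1-j} x₂^j) εʲ` and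
reducing `εʲ` by the period four of the powers of `ε` turns `F₁(x) + ε F₂(x)` into `P_m + ε Q_m`.
-/

section CommRing

variable {R : Type*} [CommRing R]

theorem exists_eq_mul_vecCons_one_iff (F : Fin 2 → R) (ε : R) :
    (∃ lam : R, ∀ i, F i = lam * ![1, ε] i) ↔ F 1 = ε * F 0 := by
  constructor
  · rintro ⟨lam, hlam⟩
    rw [hlam 0, hlam 1]
    simp [mul_comm]
  · intro h
    refine ⟨F 0, fun i => ?_⟩
    fin_cases i
    · simp
    · simp [h, mul_comm]

theorem eq_mul_iff_add_mul_eq_zero {ε a b : R} (hε : ε ^ 2 = -1) :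
    b = ε * a ↔ a + ε * b = 0 := by
  constructor
  · rintro rfl
    linear_combination a * hε
  · intro h
    linear_combination (-ε) * h + b * hε

theorem tApply_vecCons_one {m1 : ℕ} (A : Fin 2 → (Fin m1 → Fin 2) → R) (ε : R) (i0 : Fin 2) :
    tApply A ![1, ε] i0 = ∑ j ∈ range (m1 + 1), bCoeff A i0 j * ε ^ j := by
  have hprod (g : Fin m1 → Fin 2) :
      ∏ k, ![1, ε] (g k) = ε ^ #{k | g k = 1} := by
    have hentry (k : Fin m1) : ![1, ε] (g k) = if g k = 1 then ε else 1 := by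
      split_ifs with h
      · simp [h]
      · simp [show g k = 0 by omega]
    rw [prod_congr rfl fun k _ => hentry k, prod_ite]
    simp
  have hcard (g : Fin m1 → Fin 2) (_ : g ∈ univ) : #{k | g k = 1} ∈ range (m1 + 1) :=
    mem_range_succ_iff.2 ((card_filter_le _ _).trans_eq (card_fin m1))
  rw [tApply, ← sum_fiberwise_of_maps_to hcard]
  refine sum_congr rfl fun j _ => ?_
  rw [bCoeff, sum_mul]
  exact sum_congr rfl fun g hg => by rw [hprod, (mem_filter.1 hg).2]

end CommRing

theorem Pm_add_mul_Qm {m : ℕ} (A : Fin 2 → (Fin (m - 1) → Fin 2) → ℂ) {ε : ℂ}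
    (hε : ε ^ 2 = -1) :
    Pm m A + ε * Qm m A = ∑ j ∈ range m, (bCoeff A 0 j + ε * bCoeff A 1 j) * ε ^ j := by
  have hε4 : ε ^ 4 = 1 := by rw [show 4 = 2 * 2 from rfl, pow_mul, hε]; norm_num
  rw [Pm, Qm, mul_sum, ← sum_add_distrib, ← Ico_add_one_right_eq_Icc, sum_Ico_eq_sum_range]
  refine sum_congr rfl fun j _ => ?_
  rw [Nat.add_sub_cancel_left, pow_eq_pow_mod j hε4]
  obtain h | h | h | h : j % 4 = 0 ∨ j % 4 = 1 ∨ j % 4 = 2 ∨ j % 4 = 3 := by omega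
  · simp only [h, show (1 + j) % 4 = 1 by omega, if_true]
    ring
  · simp only [h, show (1 + j) % 4 = 2 by omega, Nat.reduceEqDiff, if_true, if_false]
    linear_combination (-bCoeff A 1 j) * hε
  · simp only [h, show (1 + j) % 4 = 3 by omega, Nat.reduceEqDiff, if_true, if_false]
    linear_combination (-(bCoeff A 0 j + ε * bCoeff A 1 j)) * hε
  · simp only [h, show (1 + j) % 4 = 0 by omega, Nat.reduceEqDiff, if_false]
    linear_combination (bCoeff A 1 j * (1 - ε ^ 2) - ε * bCoeff A 0 j) * hε

theorem Pm_add_mul_Qm_eq_tApply {m : ℕ} (hm : 1 ≤ m) (A : Fin 2 → (Fin (m - 1) → Fin 2) → ℂ)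
    {ε : ℂ} (hε : ε ^ 2 = -1) :
    Pm m A + ε * Qm m A = tApply A ![1, ε] 0 + ε * tApply A ![1, ε] 1 := by
  rw [Pm_add_mul_Qm A hε, tApply_vecCons_one, tApply_vecCons_one, Nat.sub_add_cancel hm,
    mul_sum, ← sum_add_distrib]
  exact sum_congr rfl fun j _ => by ring

theorem exists_eigenvalue_vecCons_one_iff {m : ℕ} (hm : 1 ≤ m)
    (A : Fin 2 → (Fin (m - 1) → Fin 2) → ℂ) {ε : ℂ} (hε : ε ^ 2 = -1) :
    (∃ lam : ℂ, ∀ i, tApply A ![1, ε] i = lam * ![1, ε] i) ↔ Pm m A + ε * Qm m A = 0 := by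
  rw [exists_eq_mul_vecCons_one_iff, eq_mul_iff_add_mul_eq_zero hε,
    Pm_add_mul_Qm_eq_tApply hm A hε]

/-- For `m ≥ 3` and an `m`th order 2-dimensional complex tensor `A`:
`x = (1, i)` is an eigenvector (`A x^{m-1} = λ x` for some `λ`) iff `P_m + i Q_m = 0`,
and `x = (1, -i)` is an eigenvector iff `P_m - i Q_m = 0`. -/
theorem stmt14 {m : ℕ} (hm : 3 ≤ m) (A : Fin 2 → (Fin (m - 1) → Fin 2) → ℂ) :
    ((∃ lam : ℂ, ∀ i, tApply A ![1, Complex.I] i = lam * ![1, Complex.I] i) ↔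
        Pm m A + Complex.I * Qm m A = 0) ∧
    ((∃ lam : ℂ, ∀ i, tApply A ![1, -Complex.I] i = lam * ![1, -Complex.I] i) ↔
        Pm m A - Complex.I * Qm m A = 0) := by
  have hm1 : 1 ≤ m := by omega
  refine ⟨exists_eigenvalue_vecCons_one_iff hm1 A Complex.I_sq, ?_⟩
  rw [sub_eq_add_neg, ← neg_mul]
  exact exists_eigenvalue_vecCons_one_iff hm1 A (by rw [neg_sq, Complex.I_sq])
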